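/- Let κ be uncountable regular with 2^κ = κ⁺ and let X be a family of injective κ-sequences of ordinals with |X| > 2^κ, such that for some fixed K ⊆ κ all pairs from X agree on K. Then there exist α ≠ β in X whose sequences agree on a set I ⊇ K and whose values off I are disjoint. -/

import Mathlib

/-!
For every partial function `p : κ ⇀ Ord` realised by some member of the family, fix one member
`wit p` extending it, and close a set `M` of ordinals under `p ↦ ran (wit p)` for all `p` with
values in `M`. As `μ = 2^κ = κ⁺` is regular and `μ^κ = μ`, iterating this closure `μ` times gives
a closed `M` of size `μ`, hence only `μ` witnesses, and some `b` is not among them. Then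
`a := wit (δ^b ↾ (δ^b)⁻¹ M)` has all its values in `M`, so a common value `δ^a_i = δ^b_j` lies in
`M` and forces `δ^a_j = δ^b_j`: outside the agreement set the values are disjoint.
-/

open Cardinal Set

universe u

theorem exists_forall_lt_of_mk_lt_cof {α ι : Type u} [LinearOrder α] (f : ι → α)
    (h : #ι < Order.cof α) :
    ∃ x, ∀ i, f i < x := by
  have : ¬IsCofinal (range f) := fun hf => ((Order.cof_le hf).trans mk_range_le).not_gt h
  obtain ⟨x, hx⟩ := not_isCofinal_iff.1 this
  exact ⟨x, fun i => hx _ ⟨i, rfl⟩⟩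

section Closure

variable {ι V : Type u}

def partialMapsInto (ι : Type u) (S : Set V) : Set (ι → Option V) :=
  {p | ∀ j, ∀ v ∈ p j, v ∈ S}

theorem mk_partialMapsInto_le (S : Set V) : #(partialMapsInto ι S) ≤ (#S + 1) ^ #ι := by
  have hrange : partialMapsInto ι S ⊆ range fun (q : ι → Option S) j => (q j).map (↑) := by
    intro p hp
    have : ∀ j, ∃ o : Option S, o.map (↑) = p j := fun j => by
      cases hpj : p j with
      | none => exact ⟨none, rfl⟩
      | some v => exact ⟨some ⟨v, hp j v hpj⟩, rfl⟩
    choose q hq using this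
    exact ⟨q, funext hq⟩
  calc #(partialMapsInto ι S) ≤ #(ι → Option S) := (mk_le_mk_of_subset hrange).trans mk_range_le
    _ = (#S + 1) ^ #ι := by rw [mk_arrow, mk_option, lift_id, lift_id]

theorem mk_partialMapsInto_le_of_le {μ : Cardinal.{u}} (hμ : ℵ₀ ≤ μ) (hpow : μ ^ #ι ≤ μ)
    {S : Set V} (hS : #S ≤ μ) : #(partialMapsInto ι S) ≤ μ :=
  calc #(partialMapsInto ι S) ≤ (#S + 1) ^ #ι := mk_partialMapsInto_le S
    _ ≤ μ ^ #ι := power_le_power_right (add_le_of_le hμ hS (one_le_aleph0.trans hμ))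
    _ ≤ μ := hpow

variable (F : (ι → Option V) → Set V)

def closureStep (S : Set V) : Set V :=
  S ∪ ⋃ p ∈ partialMapsInto ι S, F p

theorem mk_closureStep_le {μ : Cardinal.{u}} (hμ : ℵ₀ ≤ μ) (hpow : μ ^ #ι ≤ μ)
    (hF : ∀ p, #(F p) ≤ μ) {S : Set V} (hS : #S ≤ μ) : #(closureStep F S) ≤ μ := by
  refine (mk_union_le _ _).trans (add_le_of_le hμ hS ?_)
  exact (mk_biUnion_le _ _).trans <| mul_le_of_le hμ
    (mk_partialMapsInto_le_of_le hμ hpow hS) (ciSup_le' fun p => hF p)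

variable {α : Type u} [LinearOrder α] [WellFoundedLT α]

def closureStage : α → Set V :=
  wellFounded_lt.fix fun γ stage => ⋃ (β) (h : β < γ), closureStep F (stage β h)

theorem closureStage_eq (γ : α) :
    closureStage F γ = ⋃ β < γ, closureStep F (closureStage F β) :=
  wellFounded_lt.fix_eq _ γ

theorem closureStep_closureStage_subset {β γ : α} (h : β < γ) :
    closureStep F (closureStage F β) ⊆ closureStage F γ := by
  rw [closureStage_eq F γ]
  exact subset_biUnion_of_mem (u := fun β => closureStep F (closureStage F β)) h

theorem mk_closureStage_le {μ : Cardinal.{u}} (hμ : ℵ₀ ≤ μ) (hpow : μ ^ #ι ≤ μ)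
    (hF : ∀ p, #(F p) ≤ μ) (hα : #α ≤ μ) (γ : α) : #(closureStage F γ) ≤ μ := by
  induction γ using WellFoundedLT.induction with
  | ind γ ih =>
    rw [closureStage_eq]
    exact (mk_biUnion_le _ _).trans <| mul_le_of_le hμ ((mk_set_le _).trans hα)
      (ciSup_le' fun β => mk_closureStep_le F hμ hpow hF (ih β β.2))

theorem exists_closed_of_isRegular {μ : Cardinal.{u}} (hμ : μ.IsRegular) (hι : #ι < μ)
    (hpow : μ ^ #ι ≤ μ) (hF : ∀ p, #(F p) ≤ μ) :
    ∃ M : Set V, #M ≤ μ ∧ ∀ p ∈ partialMapsInto ι M, F p ⊆ M := by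
  let α := μ.ord.ToType
  have hα : #α = μ := by rw [mk_toType, card_ord]
  have : Nonempty α :=
    Ordinal.nonempty_toType_iff.2 (ord_pos.2 (aleph0_pos.trans_le hμ.aleph0_le)).ne'
  let M := ⋃ γ : α, closureStep F (closureStage F γ)
  refine ⟨M, ?_, fun p hp => ?_⟩
  · have hμ₀ := hμ.aleph0_le
    exact (mk_iUnion_le _).trans <| mul_le_of_le hμ₀ hα.le <| ciSup_le' fun γ =>
      mk_closureStep_le F hμ₀ hpow hF (mk_closureStage_le F hμ₀ hpow hF hα.le γ)
  have : ∀ j, ∃ γ : α, ∀ v ∈ p j, v ∈ closureStep F (closureStage F γ) := fun j => by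
    cases hpj : p j with
    | none => exact ⟨Classical.arbitrary α, by simp⟩
    | some v => simpa [M] using hp j v hpj
  choose γ hγ using this
  obtain ⟨β, hβ⟩ := exists_forall_lt_of_mk_lt_cof γ (by rwa [Ordinal.cof_toType, hμ.cof_ord])
  have hpβ : p ∈ partialMapsInto ι (closureStage F β) := fun j v hv =>
    closureStep_closureStage_subset F (hβ j) (hγ j v hv)
  exact (subset_biUnion_of_mem (u := F) hpβ).trans
    (subset_union_right.trans (subset_iUnion (fun γ => closureStep F (closureStage F γ)) β))

end Closure

theorem exists_ne_forall_eq_of_apply_eq_apply {ι V A : Type u} (δ : A → ι → V)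
    {μ : Cardinal.{u}} (hμ : μ.IsRegular) (hι : #ι < μ) (hpow : μ ^ #ι ≤ μ) (hA : μ < #A) :
    ∃ a b, a ≠ b ∧ ∀ i j, δ a i = δ b j → δ a j = δ b j := by
  classical
  have : Nonempty A := mk_ne_zero_iff.1 (pos_of_gt hA).ne'
  let wit (p : ι → Option V) : A := Classical.epsilon fun a => ∀ j, ∀ v ∈ p j, δ a j = v
  obtain ⟨M, hM, hclosed⟩ := exists_closed_of_isRegular (fun p => range (δ (wit p))) hμ hι hpow
    fun p => mk_range_le.trans hι.le
  obtain ⟨b, hb⟩ : ∃ b, b ∉ wit '' partialMapsInto ι M := by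
    by_contra! h
    have hW : #(wit '' partialMapsInto ι M) ≤ μ :=
      mk_image_le.trans (mk_partialMapsInto_le_of_le hμ.aleph0_le hpow hM)
    rw [eq_univ_of_forall h, mk_univ] at hW
    exact hW.not_gt hA
  let p (j : ι) : Option V := if δ b j ∈ M then some (δ b j) else none
  have hp : ∀ j, ∀ v ∈ p j, δ b j ∈ M ∧ δ b j = v := fun j v hv => by
    simpa only [p, Option.mem_def, Option.ite_none_right_eq_some, Option.some_inj] using hv
  have hpM : p ∈ partialMapsInto ι M := fun j v hv => (hp j v hv).2 ▸ (hp j v hv).1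
  have hap : ∀ j, ∀ v ∈ p j, δ (wit p) j = v :=
    Classical.epsilon_spec (p := fun a => ∀ j, ∀ v ∈ p j, δ a j = v)
      ⟨b, fun j v hv => (hp j v hv).2⟩
  refine ⟨wit p, b, fun h => hb ⟨p, hpM, h⟩, fun i j hij => hap j _ (if_pos ?_)⟩
  exact hij ▸ hclosed p hpM ⟨i, rfl⟩

theorem neat_pair_above_K_general (κ : Cardinal.{0}) (hℵ : Cardinal.aleph0 < κ)
    (hch : 2 ^ κ = Order.succ κ)
    (A : Type 1) (hA : Cardinal.lift.{1} (2 ^ κ) < #A)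
    (δ : A → (Cardinal.ord κ).ToType → Ordinal.{0})
    (K : Set (Cardinal.ord κ).ToType)
    (hK : ∀ a b : A, ∀ i ∈ K, δ a i = δ b i) :
    ∃ a b : A, a ≠ b ∧ ∃ I : Set (Cardinal.ord κ).ToType, K ⊆ I ∧
      (∀ i ∈ I, δ a i = δ b i) ∧
      ∀ i ∉ I, ∀ j ∉ I, δ a i ≠ δ b j := by
  let ι := ULift.{1} (Cardinal.ord κ).ToType
  have hι : #ι = lift κ := by rw [mk_uLift, mk_toType, card_ord]
  have hκ : ℵ₀ ≤ lift.{1} κ := by simpa using hℵ.le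
  have h2κ : 2 ^ lift.{1} κ = Order.succ (lift.{1} κ) := by
    rw [← lift_two.{1, 0}, ← lift_power, hch, lift_succ]
  have hpow : Order.succ (lift.{1} κ) ^ #ι ≤ Order.succ (lift.{1} κ) := by
    rw [hι, ← h2κ, ← power_mul, mul_eq_self hκ]
  obtain ⟨a, b, hab, hmeet⟩ :=
    exists_ne_forall_eq_of_apply_eq_apply (fun a (i : ι) => δ a i.down) (isRegular_succ hκ)
      (hι ▸ Order.lt_succ _) hpow (by rwa [← lift_succ, ← hch])
  exact ⟨a, b, hab, {i | δ a i = δ b i}, hK a b, fun _ => id,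
    fun i _ j hj hij => hj (hmeet ⟨i⟩ ⟨j⟩ hij)⟩

/-- Let `κ` be uncountable regular with `2^κ = κ⁺`, and let `⟨δ^a : a ∈ A⟩` be a family of
injective `κ`-sequences of ordinals with `#A > 2^κ` such that for some fixed `K ⊆ κ` all
members of the family agree on `K`. Then there are `a ≠ b` and a set `I ⊇ K` such that
`δ^a` and `δ^b` agree on `I` and their values outside `I` are disjoint. -/
theorem neat_pair_above_K (κ : Cardinal.{0}) (hℵ : Cardinal.aleph0 < κ)
    (hreg : κ.IsRegular) (hch : 2 ^ κ = Order.succ κ)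
    (A : Type 1) (hA : Cardinal.lift.{1} (2 ^ κ) < #A)
    (δ : A → (Cardinal.ord κ).ToType → Ordinal.{0})
    (hinj : ∀ a, Function.Injective (δ a))
    (K : Set (Cardinal.ord κ).ToType)
    (hK : ∀ a b : A, ∀ i ∈ K, δ a i = δ b i) :
    ∃ a b : A, a ≠ b ∧ ∃ I : Set (Cardinal.ord κ).ToType, K ⊆ I ∧
      (∀ i ∈ I, δ a i = δ b i) ∧
      ∀ i ∉ I, ∀ j ∉ I, δ a i ≠ δ b j :=
  neat_pair_above_K_general κ hℵ hch A hA δ K hK
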